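/- arXiv:1908.09650 — 2 statements merged into one kernel-verified Lean document; each statement's English description precedes it below -/
import Mathlib

section
/- As r → ∞, the combination f₁(r) + f₂(r) = O(e^r), where f₁(r) = r[3 - 8cosh(2r) - cosh(4r)] and f₂(r) = sinh(2r)[8 log(2cosh r) - 1] + sinh(4r) log(2cosh r); in particular the leading terms of order r·e^{4r} and r·e^{2r} cancel. -/
/-!
Write `log (2 cosh r) = r + ε` with `ε = log (1 + e^{-2r})`. Since `cosh x - sinh x = e^{-x}`, all
terms carrying the factor `r` combine to `r (3 - 8 e^{-2r} - e^{-4r}) = O(r)`. The only other term of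
size `e^{2r}`, namely `-sinh 2r`, cancels against the first-order part `e^{-2r} sinh 4r` of
`ε sinh 4r`; what is left is `(ε - e^{-2r}) sinh 4r = O(e^{-4r} e^{4r})` and terms that are `O(1)`.
So the sum is even `O(r)`.
-/

open Real

lemma Real.log_one_add_mem_Icc {x : ℝ} (hx : 0 ≤ x) : log (1 + x) ∈ Set.Icc (x - x ^ 2) x := by
  have hx1 : 0 < 1 + x := by linarith
  constructor
  · have : x - x ^ 2 ≤ 1 - (1 + x)⁻¹ := by
      rw [sub_le_sub_iff, ← sub_le_sub_iff_right 1]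
      field_simp
      nlinarith [pow_nonneg hx 3]
    linarith [one_sub_inv_le_log_of_pos hx1]
  · linarith [log_le_sub_one_of_pos hx1]

lemma Real.log_two_mul_cosh (r : ℝ) : log (2 * cosh r) = r + log (1 + exp (-(2 * r))) := by
  have : 2 * cosh r = exp r * (1 + exp (-(2 * r))) := by
    rw [cosh_eq, mul_add, mul_one, ← exp_add]
    ring_nf
  rw [this, log_mul (exp_ne_zero r) (by positivity), log_exp]

lemma Real.abs_sinh_le_exp_div_two {x : ℝ} (hx : 0 ≤ x) : |sinh x| ≤ exp x / 2 := by
  rw [abs_of_nonneg (sinh_nonneg_iff.mpr hx), sinh_eq]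
  linarith [exp_pos (-x)]

lemma f1_add_f2_eq (r ε : ℝ) :
    r * (3 - 8 * cosh (2 * r) - cosh (4 * r))
        + (sinh (2 * r) * (8 * (r + ε) - 1) + sinh (4 * r) * (r + ε))
      = r * (3 - 8 * exp (-(2 * r)) - exp (-(2 * r)) ^ 2)
        + (exp (-(2 * r)) - exp (-(2 * r)) ^ 3) / 2
        + (ε - exp (-(2 * r))) * sinh (4 * r) + 8 * ε * sinh (2 * r) := by
  have h2 : exp (2 * r) = exp r ^ 2 := by rw [← exp_nat_mul]; norm_num
  have h4 : exp (4 * r) = exp r ^ 4 := by rw [← exp_nat_mul]; norm_num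
  simp only [cosh_eq, sinh_eq, exp_neg, h2, h4]
  field_simp
  ring

lemma abs_f1_add_f2_le {r : ℝ} (hr : 0 ≤ r) :
    |r * (3 - 8 * cosh (2 * r) - cosh (4 * r))
        + (sinh (2 * r) * (8 * log (2 * cosh r) - 1) + sinh (4 * r) * log (2 * cosh r))|
      ≤ 12 * r + 5 := by
  rw [log_two_mul_cosh, f1_add_f2_eq]
  set b := exp (-(2 * r)) with hb
  set ε := log (1 + b)
  have hb_pos : 0 < b := exp_pos _
  have hb_le_one : b ≤ 1 := exp_le_one_iff.mpr (by linarith)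
  have hε := log_one_add_mem_Icc hb_pos.le
  have hb_mul_exp : b * exp (2 * r) = 1 := by rw [hb, ← exp_add]; simp
  have hb_sq_mul_exp : b ^ 2 * exp (4 * r) = 1 := by
    rw [hb, ← exp_nat_mul, ← exp_add]; ring_nf; exact exp_zero
  have h_linear : |r * (3 - 8 * b - b ^ 2)| ≤ 12 * r := by
    rw [abs_mul, abs_of_nonneg hr, mul_comm]
    gcongr
    rw [abs_le]; constructor <;> nlinarith
  have h_cubic : |(b - b ^ 3) / 2| ≤ 1 / 2 := by
    rw [abs_le]; constructor <;> nlinarith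
  have h_second_order : |(ε - b) * sinh (4 * r)| ≤ 1 / 2 := by
    rw [abs_mul]
    calc |ε - b| * |sinh (4 * r)| ≤ b ^ 2 * (exp (4 * r) / 2) := by
          gcongr
          · rw [abs_le]; constructor <;> linarith [hε.1, hε.2, sq_nonneg b]
          · exact abs_sinh_le_exp_div_two (by linarith)
      _ = 1 / 2 := by rw [← hb_sq_mul_exp]; ring
  have h_first_order : |8 * ε * sinh (2 * r)| ≤ 4 := by
    rw [abs_mul, abs_mul]
    calc |8| * |ε| * |sinh (2 * r)| ≤ 8 * b * (exp (2 * r) / 2) := by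
          gcongr
          · norm_num
          · rw [abs_le]; constructor <;> nlinarith [hε.1, hε.2]
          · exact abs_sinh_le_exp_div_two (by linarith)
      _ = 4 := by rw [mul_assoc, mul_div_assoc', hb_mul_exp]; ring
  calc _ ≤ |r * (3 - 8 * b - b ^ 2)| + |(b - b ^ 3) / 2| + |(ε - b) * sinh (4 * r)|
        + |8 * ε * sinh (2 * r)| := norm_add₄_le (E := ℝ)
    _ ≤ 12 * r + 5 := by linarith

/-- f₁(r) + f₂(r) = O(e^r) as r → ∞ : the leading exponentially growing
    terms of f₁ and f₂ cancel. -/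
theorem f1_plus_f2_bigO :
    ∃ C R : ℝ, 0 < C ∧ 0 < R ∧ ∀ r ≥ R,
      |(r * (3 - 8 * Real.cosh (2 * r) - Real.cosh (4 * r)))
        + (Real.sinh (2 * r) * (8 * Real.log (2 * Real.cosh r) - 1)
            + Real.sinh (4 * r) * Real.log (2 * Real.cosh r))|
      ≤ C * Real.exp r := by
  refine ⟨12, 1, by norm_num, one_pos, fun r hr => ?_⟩
  calc _ ≤ 12 * r + 5 := abs_f1_add_f2_le (by linarith)
    _ ≤ 12 * exp r := by linarith [add_one_le_exp r]
end

section
/- Let a > 0 and suppose Φ : [0,∞) → ℝ satisfies Φ'' + (2r/(r²+a²))Φ' + 2Φ(1-Φ²) = 0 with Φ(0)=0, 0 ≤ Φ < 1 on [0,∞), Φ strictly increasing, and Φ(r) → 1, Φ'(r) → 0 as r → ∞. Let Φ₀(r) = tanh(r). Then Φ(r) ≥ Φ₀(r) for all r ≥ 0; equivalently V₁(r) := 6(Φ(r)² - Φ₀(r)²) ≥ 0. -/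
open Filter

lemma tanh_eq_exp (x : ℝ) :
    Real.tanh x = (Real.exp (2*x) - 1) / (Real.exp (2*x) + 1) := by
  have h2 : Real.exp (2*x) = Real.exp x * Real.exp x := by
    rw [two_mul, Real.exp_add]
  have hpos : 0 < Real.exp x + Real.exp (-x) := by positivity
  have hx : Real.exp x ≠ 0 := Real.exp_ne_zero x
  have hs : Real.exp x + (Real.exp x)⁻¹ ≠ 0 := by positivity
  rw [Real.tanh_eq_sinh_div_cosh, Real.sinh_eq, Real.cosh_eq, h2, Real.exp_neg]
  field_simp

/-- The wormhole kink dominates the flat kink: Φ(r) ≥ tanh(r) for r ≥ 0. -/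
theorem wormhole_kink_dominates_flat_kink
    (a : ℝ) (ha : 0 < a) (Φ : ℝ → ℝ) (hΦ : ContDiff ℝ (⊤ : ℕ∞) Φ)
    (hode : ∀ r ≥ (0:ℝ),
      deriv (deriv Φ) r + (2 * r / (r ^ 2 + a ^ 2)) * deriv Φ r
        + 2 * Φ r * (1 - Φ r ^ 2) = 0)
    (h0 : Φ 0 = 0)
    (hrange : ∀ r ≥ (0:ℝ), 0 ≤ Φ r ∧ Φ r < 1)
    (hmono : StrictMonoOn Φ (Set.Ici 0))
    (hlim : Tendsto Φ atTop (nhds 1))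
    (hlim' : Tendsto (deriv Φ) atTop (nhds 0)) :
    (∀ r ≥ (0:ℝ), Real.tanh r ≤ Φ r) ∧
    (∀ r ≥ (0:ℝ), 0 ≤ 6 * (Φ r ^ 2 - (Real.tanh r) ^ 2)) := by
  have hdiff : Differentiable ℝ Φ := hΦ.differentiable (by simp)
  have hPhiInf : ContDiff ℝ ((⊤:ℕ∞) : WithTop ℕ∞) Φ := hΦ.of_le (by simp)
  have hDc : ContDiff ℝ ((⊤:ℕ∞) : WithTop ℕ∞) (deriv Φ) := (contDiff_infty_iff_deriv.mp hPhiInf).2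
  have hDdiff : Differentiable ℝ (deriv Φ) := hDc.differentiable (by simp)
  -- derivative of Φ is nonnegative on [0,∞)
  have hD0 : ∀ r ≥ (0:ℝ), 0 ≤ deriv Φ r := by
    intro r hr
    have h := ((hdiff r).hasDerivAt.hasDerivWithinAt (s := Set.Ioi r))
    rw [hasDerivWithinAt_iff_tendsto_slope] at h
    have hne : r ∉ Set.Ioi r := by simp
    rw [Set.diff_singleton_eq_self hne] at h
    refine ge_of_tendsto h ?_
    filter_upwards [self_mem_nhdsWithin] with s hs
    have hsr : r < s := hs
    have : Φ r ≤ Φ s := (hmono hr (le_trans hr hsr.le) hsr).le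
    rw [slope_def_field]
    exact div_nonneg (by linarith) (by linarith)
  -- the energy
  set E : ℝ → ℝ := fun r => (deriv Φ r) ^ 2 - (1 - Φ r ^ 2) ^ 2 with hE_def
  have hEderiv : ∀ r, HasDerivAt E
      (2 * deriv Φ r * deriv (deriv Φ) r + 4 * Φ r * (1 - Φ r ^ 2) * deriv Φ r) r := by
    intro r
    have h1 : HasDerivAt (fun r => (deriv Φ r) ^ 2)
        (2 * deriv Φ r * deriv (deriv Φ) r) r := by
      simpa [mul_comm] using ((hDdiff r).hasDerivAt.fun_pow 2)
    have hin : HasDerivAt (fun r => 1 - Φ r ^ 2) (-(2 * Φ r * deriv Φ r)) r := by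
      simpa [mul_comm] using (hasDerivAt_const r (1:ℝ)).fun_sub ((hdiff r).hasDerivAt.fun_pow 2)
    have h2 := hin.fun_mul hin
    have hfun : E = fun s => (deriv Φ s) ^ 2 - (1 - Φ s ^ 2) * (1 - Φ s ^ 2) := by
      funext s; simp only [hE_def]; ring
    rw [hfun]
    exact (h1.fun_sub h2).congr_deriv (by ring)
  have hEanti : AntitoneOn E (Set.Ici 0) := by
    apply antitoneOn_of_deriv_nonpos (convex_Ici 0)
    · refine Continuous.continuousOn ?_
      exact (hDc.continuous.pow 2).sub ((continuous_const.sub (hΦ.continuous.pow 2)).pow 2)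
    · intro r _
      exact (hEderiv r).differentiableAt.differentiableWithinAt
    · intro r hr
      rw [interior_Ici] at hr
      have hr0 : (0:ℝ) ≤ r := le_of_lt hr
      rw [(hEderiv r).deriv]
      have hode' := hode r hr0
      have hdd : deriv (deriv Φ) r =
          -(2 * r / (r ^ 2 + a ^ 2)) * deriv Φ r - 2 * Φ r * (1 - Φ r ^ 2) := by
        linarith
      rw [hdd]
      have hfrac : 0 ≤ 2 * r / (r ^ 2 + a ^ 2) := by positivity
      nlinarith [sq_nonneg (deriv Φ r), mul_nonneg hfrac (sq_nonneg (deriv Φ r))]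
  have hEtend : Tendsto E atTop (nhds 0) := by
    have h1 : Tendsto (fun r => (deriv Φ r) ^ 2) atTop (nhds 0) := by
      simpa using hlim'.pow 2
    have h2 : Tendsto (fun r => (1 - Φ r ^ 2) ^ 2) atTop (nhds 0) := by
      have : Tendsto (fun r => 1 - Φ r ^ 2) atTop (nhds 0) := by
        have := (tendsto_const_nhds (x := (1:ℝ)) (f := atTop)).sub (hlim.pow 2)
        simpa using this
      simpa using this.pow 2
    simpa using h1.sub h2
  have hEnn : ∀ r ≥ (0:ℝ), 0 ≤ E r := by
    intro r hr
    refine le_of_tendsto hEtend ?_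
    filter_upwards [eventually_ge_atTop r] with s hs
    exact hEanti hr (le_trans hr hs) hs
  -- key gradient bound: Φ' ≥ 1 - Φ²
  have hkey : ∀ r ≥ (0:ℝ), 1 - Φ r ^ 2 ≤ deriv Φ r := by
    intro r hr
    have hE := hEnn r hr
    have hD := hD0 r hr
    obtain ⟨h1, h2⟩ := hrange r hr
    have hnn : 0 ≤ 1 - Φ r ^ 2 := by nlinarith
    exact (pow_le_pow_iff_left₀ hnn hD two_ne_zero).mp (by simp only [hE_def] at hE; linarith)
  -- comparison function
  set f : ℝ → ℝ := fun r => Real.log (1 + Φ r) - Real.log (1 - Φ r) - 2 * r with hf_def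
  have hfd : ∀ r ≥ (0:ℝ), HasDerivAt f
      (deriv Φ r / (1 + Φ r) - (-(deriv Φ r)) / (1 - Φ r) - 2) r := by
    intro r hr
    obtain ⟨h1, h2⟩ := hrange r hr
    have hp : (0:ℝ) < 1 + Φ r := by linarith
    have hq : (0:ℝ) < 1 - Φ r := by linarith
    have hA : HasDerivAt (fun r => Real.log (1 + Φ r)) (deriv Φ r / (1 + Φ r)) r := by
      have := ((hasDerivAt_const r (1:ℝ)).add (hdiff r).hasDerivAt).log hp.ne'
      simpa using this
    have hB : HasDerivAt (fun r => Real.log (1 - Φ r)) ((-(deriv Φ r)) / (1 - Φ r)) r := by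
      have := ((hasDerivAt_const r (1:ℝ)).sub (hdiff r).hasDerivAt).log hq.ne'
      simpa using this
    have hC : HasDerivAt (fun r => 2 * r) 2 r := by
      simpa using (hasDerivAt_id r).const_mul 2
    exact (hA.sub hB).sub hC
  have hfmono : MonotoneOn f (Set.Ici 0) := by
    apply monotoneOn_of_deriv_nonneg (convex_Ici 0)
    · intro r hr
      exact ((hfd r hr).differentiableAt).continuousAt.continuousWithinAt
    · intro r hr
      rw [interior_Ici] at hr
      exact (hfd r hr.le).differentiableAt.differentiableWithinAt
    · intro r hr
      rw [interior_Ici] at hr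
      have hr0 : (0:ℝ) ≤ r := hr.le
      rw [(hfd r hr0).deriv]
      obtain ⟨h1, h2⟩ := hrange r hr0
      have hp : (0:ℝ) < 1 + Φ r := by linarith
      have hq : (0:ℝ) < 1 - Φ r := by linarith
      have hk := hkey r hr0
      have e1 : 1 - Φ r ≤ deriv Φ r / (1 + Φ r) := by
        rw [le_div_iff₀ hp]; nlinarith
      have e2 : 1 + Φ r ≤ deriv Φ r / (1 - Φ r) := by
        rw [le_div_iff₀ hq]; nlinarith
      have : (-(deriv Φ r)) / (1 - Φ r) = -(deriv Φ r / (1 - Φ r)) := by ring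
      rw [this]
      linarith
  have hmain : ∀ r ≥ (0:ℝ), Real.tanh r ≤ Φ r := by
    intro r hr
    obtain ⟨h1, h2⟩ := hrange r hr
    have hp : (0:ℝ) < 1 + Φ r := by linarith
    have hq : (0:ℝ) < 1 - Φ r := by linarith
    have hf0 : f 0 = 0 := by simp [hf_def, h0]
    have hfr : 0 ≤ f r := by
      have := hfmono (Set.self_mem_Ici) hr hr
      rwa [hf0] at this
    have hlog : 2 * r ≤ Real.log ((1 + Φ r) / (1 - Φ r)) := by
      rw [Real.log_div hp.ne' hq.ne']
      simp only [hf_def] at hfr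
      linarith
    have hexp : Real.exp (2 * r) ≤ (1 + Φ r) / (1 - Φ r) := by
      calc Real.exp (2 * r) ≤ Real.exp (Real.log ((1 + Φ r) / (1 - Φ r))) :=
            Real.exp_le_exp.mpr hlog
        _ = (1 + Φ r) / (1 - Φ r) := Real.exp_log (by positivity)
    have hX : 0 < Real.exp (2 * r) + 1 := by positivity
    rw [tanh_eq_exp, div_le_iff₀ hX]
    rw [le_div_iff₀ hq] at hexp
    nlinarith
  refine ⟨hmain, ?_⟩
  intro r hr
  have h1 := hmain r hr
  have ht0 : 0 ≤ Real.tanh r := by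
    rw [tanh_eq_exp]
    have : (1:ℝ) ≤ Real.exp (2 * r) := by
      rw [← Real.exp_zero]; exact Real.exp_le_exp.mpr (by linarith)
    apply div_nonneg (by linarith) (by positivity)
  nlinarith
end
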